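/- In the single-agent multi-pointed PSPACE-hardness construction, the following holds for every 1 ≤ i ≤ n+1: let α be any truth assignment to x_1,…,x_n that sets all of x_i,…,x_n to true, let α' be the restriction of α to x_1,…,x_{i-1}, and let (M,w) be the group of worlds corresponding to α with designated world w. Then Q_i x_i … ∃x_{n-1}∀x_n.ψ is true under α' if and only if M,w ⊨ ⟨E_i,E_i⟩[E_{i+1},E_{i+1}]…[E_n,E_n]χ' when i is odd, and if and only if M,w ⊨ [E_i,E_i]⟨E_{i+1},E_{i+1}⟩…[E_n,E_n]χ' when i is even (for i = n+1 the condition is M,w ⊨ χ'), where the quantifier prefix alternates ∃ for odd indices and ∀ for even indices. -/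

import Mathlib

namespace DELMC

inductive DForm (Agent : Type) : Type
  | atom : ℕ → DForm Agent
  | neg : DForm Agent → DForm Agent
  | and : DForm Agent → DForm Agent → DForm Agent
  | K : Agent → DForm Agent → DForm Agent
  | upd : (k : ℕ) → (Agent → Fin (k+1) → Fin (k+1) → Bool) →
      (Fin (k+1) → DForm Agent) → (Fin (k+1) → List (ℕ × Bool)) →
      (Fin (k+1) → Bool) → DForm Agent → DForm Agent

structure EpiModel (Agent : Type) where
  World : Type
  rel : Agent → World → World → Prop
  val : World → ℕ → Prop

def postEval (l : List (ℕ × Bool)) (p : ℕ) : Option Bool :=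
  (l.find? (fun q => q.1 == p)).map Prod.snd

def updModel {Agent : Type} (M : EpiModel Agent) (k : ℕ)
    (S : Agent → Fin (k+1) → Fin (k+1) → Bool)
    (dom : M.World → Fin (k+1) → Prop)
    (post : Fin (k+1) → List (ℕ × Bool)) : EpiModel Agent where
  World := { p : M.World × Fin (k+1) // dom p.1 p.2 }
  rel a u v := M.rel a u.1.1 v.1.1 ∧ S a u.1.2 v.1.2 = true
  val u p :=
    match postEval (post u.1.2) p with
    | some b => b = true
    | none => M.val u.1.1 p

def Sat {Agent : Type} : (M : EpiModel Agent) → M.World → DForm Agent → Prop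
  | M, w, .atom p => M.val w p
  | M, w, .neg φ => ¬ Sat M w φ
  | M, w, .and φ ψ => Sat M w φ ∧ Sat M w ψ
  | M, w, .K a φ => ∀ v, M.rel a w v → Sat M v φ
  | M, w, .upd k S pre post des φ =>
      ∀ e, des e = true → ∀ h : Sat M w (pre e),
        Sat (updModel M k S (fun v e' => Sat M v (pre e')) post) ⟨(w, e), h⟩ φ

/-- `K̂_a φ := ¬ K_a ¬ φ`. -/
def khat {Agent : Type} (a : Agent) (φ : DForm Agent) : DForm Agent := .neg (.K a (.neg φ))

/-- The formula `⊤` (as the abbreviation `¬(p ∧ ¬p)`). -/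
def dtop {Agent : Type} : DForm Agent := .neg (.and (.atom 0) (.neg (.atom 0)))

/-- Implication `φ → ψ`, as the abbreviation `¬(φ ∧ ¬ψ)`. -/
def dimp {Agent : Type} (φ ψ : DForm Agent) : DForm Agent := .neg (.and φ (.neg ψ))

/-- Conjunction of a list of formulas. -/
def bigAnd {Agent : Type} : List (DForm Agent) → DForm Agent
  | [] => dtop
  | [φ] => φ
  | φ :: rest => .and φ (bigAnd rest)

/-- An epistemic model is S5 if all relations are equivalence relations. -/
def EpiModel.IsS5 {Agent : Type} (M : EpiModel Agent) : Prop := ∀ a, Equivalence (M.rel a)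

/-- A list of literals contains no complementary pair. -/
def NoComplPair (l : List (ℕ × Bool)) : Prop := ∀ p : ℕ, ¬ ((p, true) ∈ l ∧ (p, false) ∈ l)

/-- All update modalities in the formula use S5 event models (with no constraint on
designated events or postconditions beyond non-complementarity). -/
def DForm.updsS5 {Agent : Type} : DForm Agent → Prop
  | .atom _ => True
  | .neg φ => φ.updsS5
  | .and φ ψ => φ.updsS5 ∧ ψ.updsS5
  | .K _ φ => φ.updsS5
  | .upd _ S pre post _ φ =>
      (∀ a, Equivalence (fun i j => S a i j = true)) ∧
      (∀ e, NoComplPair (post e)) ∧ (∀ e, (pre e).updsS5) ∧ φ.updsS5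

/-- All update modalities are single-pointed (exactly one designated event). -/
def DForm.updsSingle {Agent : Type} : DForm Agent → Prop
  | .atom _ => True
  | .neg φ => φ.updsSingle
  | .and φ ψ => φ.updsSingle ∧ ψ.updsSingle
  | .K _ φ => φ.updsSingle
  | .upd _ _ pre _ des φ =>
      (∃! e, des e = true) ∧ (∀ e, (pre e).updsSingle) ∧ φ.updsSingle

/-- All update modalities have empty postconditions. -/
def DForm.updsNoPost {Agent : Type} : DForm Agent → Prop
  | .atom _ => True
  | .neg φ => φ.updsNoPost
  | .and φ ψ => φ.updsNoPost ∧ ψ.updsNoPost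
  | .K _ φ => φ.updsNoPost
  | .upd _ _ pre post _ φ =>
      (∀ e, post e = []) ∧ (∀ e, (pre e).updsNoPost) ∧ φ.updsNoPost

/-- The formula contains no update modalities (it is a formula of basic epistemic logic). -/
def DForm.noUpd {Agent : Type} : DForm Agent → Prop
  | .atom _ => True
  | .neg φ => φ.noUpd
  | .and φ ψ => φ.noUpd ∧ ψ.noUpd
  | .K _ φ => φ.noUpd
  | .upd _ _ _ _ _ _ => False

/-- All propositional variables occurring in the formula belong to `s`. -/
def DForm.atomsSub {Agent : Type} (s : Set ℕ) : DForm Agent → Prop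
  | .atom p => p ∈ s
  | .neg φ => φ.atomsSub s
  | .and φ ψ => φ.atomsSub s ∧ ψ.atomsSub s
  | .K _ φ => φ.atomsSub s
  | .upd _ _ pre post _ φ =>
      (∀ e, (pre e).atomsSub s) ∧ (∀ e q, q ∈ post e → q.1 ∈ s) ∧ φ.atomsSub s

/-- Event models (with events `Fin (k+1)`, hence finite and nonempty). -/
structure EvtModel (Agent : Type) where
  k : ℕ
  S : Agent → Fin (k+1) → Fin (k+1) → Bool
  pre : Fin (k+1) → DForm Agent
  post : Fin (k+1) → List (ℕ × Bool)

def EvtModel.IsS5 {Agent : Type} (E : EvtModel Agent) : Prop :=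
  ∀ a, Equivalence (fun i j => E.S a i j = true)

def EvtModel.NoPost {Agent : Type} (E : EvtModel Agent) : Prop := ∀ e, E.post e = []

/-- The product update `M ⊗ E` of an epistemic model with an event model. -/
def EpiModel.update {Agent : Type} (M : EpiModel Agent) (E : EvtModel Agent) : EpiModel Agent :=
  updModel M E.k E.S (fun w e => Sat M w (E.pre e)) E.post

/-- The single-pointed update modality `[E, d]φ` as a formula. -/
def updSingle {Agent : Type} (E : EvtModel Agent) (d : Fin (E.k+1)) (φ : DForm Agent) :
    DForm Agent :=
  .upd E.k E.S E.pre E.post (fun e => decide (e = d)) φ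

/-- The multi-pointed update modality `[E, E_d]φ` with all events designated. -/
def updAll {Agent : Type} (E : EvtModel Agent) (φ : DForm Agent) : DForm Agent :=
  .upd E.k E.S E.pre E.post (fun _ => true) φ

/-- The submodel of `M` induced by the set `U` of worlds. -/
def EpiModel.restrict {Agent : Type} (M : EpiModel Agent) (U : M.World → Prop) :
    EpiModel Agent where
  World := {w : M.World // U w}
  rel a u v := M.rel a u.1 v.1
  val u p := M.val u.1 p

/-- `Z` is a bisimulation between the models `M` and `N`. -/
def IsBisim {Agent : Type} (M N : EpiModel Agent) (Z : M.World → N.World → Prop) : Prop :=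
  ∀ u u', Z u u' →
    (∀ p, M.val u p ↔ N.val u' p) ∧
    (∀ a v, M.rel a u v → ∃ v', N.rel a u' v' ∧ Z v v') ∧
    (∀ a v', N.rel a u' v' → ∃ v, M.rel a u v ∧ Z v v')

/-- The pointed models `(M, w)` and `(N, v)` are bisimilar. -/
def Bisimilar {Agent : Type} (M : EpiModel Agent) (w : M.World)
    (N : EpiModel Agent) (v : N.World) : Prop :=
  ∃ Z, IsBisim M N Z ∧ Z w v

/-- Quantifier-free propositional formulas. -/
inductive PropForm : Type
  | atom : ℕ → PropForm
  | neg : PropForm → PropForm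
  | and : PropForm → PropForm → PropForm

def PropForm.eval (α : ℕ → Bool) : PropForm → Bool
  | .atom p => α p
  | .neg φ => !(φ.eval α)
  | .and φ ψ => φ.eval α && ψ.eval α

def PropForm.atomsSub (s : Set ℕ) : PropForm → Prop
  | .atom p => p ∈ s
  | .neg φ => φ.atomsSub s
  | .and φ ψ => φ.atomsSub s ∧ ψ.atomsSub s

/-- `β` is lexicographically larger than `α` w.r.t. the ordering `x_1 ≺ … ≺ x_n`
(variable `x_i` is the propositional variable `i`). -/
def LexGT (n : ℕ) (β α : ℕ → Bool) : Prop :=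
  ∃ i, 1 ≤ i ∧ i ≤ n ∧ β i = true ∧ α i = false ∧ ∀ j, 1 ≤ j → j < i → β j = α j

/-- `α` is the lexicographically maximal assignment satisfying `ψ` (w.r.t. `x_1 ≺ … ≺ x_n`). -/
def IsLexMaxSat (n : ℕ) (ψ : PropForm) (α : ℕ → Bool) : Prop :=
  ψ.eval α = true ∧ ∀ β, ψ.eval β = true → ¬ LexGT n β α

/-- Truth of the partially quantified Boolean formula `Q_i x_i … Q_n x_n. ψ` under an
assignment, where `Q_j = ∃` for odd `j` and `Q_j = ∀` for even `j`; the first argument is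
the number of remaining quantifiers (i.e. `n + 1 - i`), the second is the index `i`. -/
def QBFAux (ψ : PropForm) : ℕ → ℕ → (ℕ → Bool) → Prop
  | 0, _, α => ψ.eval α = true
  | m+1, i, α =>
    if i % 2 = 1 then ∃ b, QBFAux ψ m (i+1) (Function.update α i b)
    else ∀ b, QBFAux ψ m (i+1) (Function.update α i b)

/-- Truth of the quantified Boolean formula `∃x_1 ∀x_2 … Q_n x_n. ψ`. -/
def QBFTrue (n : ℕ) (ψ : PropForm) : Prop := QBFAux ψ n 1 (fun _ => false)

/-- Concrete finite epistemic models, suitable as inputs of algorithms. -/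
structure FinModel (Agent : Type) where
  m : ℕ
  rel : Agent → Fin (m+1) → Fin (m+1) → Bool
  val : Fin (m+1) → List ℕ

def FinModel.toEpi {Agent : Type} (M : FinModel Agent) : EpiModel Agent where
  World := Fin (M.m+1)
  rel a u v := M.rel a u v = true
  val w p := p ∈ M.val w

def FinModel.IsS5 {Agent : Type} (M : FinModel Agent) : Prop :=
  ∀ a, Equivalence (fun u v => M.rel a u v = true)


/-! ### The Δ₂ᵖ-hardness construction (single agent, postconditions).
Variable `z` is the propositional variable `0`; variable `x_i` is `i`. -/

/-- The embedding of propositional formulas into the (dynamic) epistemic language. -/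
def PropForm.toDForm {Agent : Type} : PropForm → DForm Agent
  | .atom p => .atom p
  | .neg φ => .neg φ.toDForm
  | .and φ ψ => .and φ.toDForm ψ.toDForm

/-- The initial model of the Δ₂ᵖ-hardness construction: worlds `w₀ = 0` (making exactly `z`
true) and `w₁ = 1` (making everything false), fully `a`-related. -/
def deltaM : EpiModel Unit where
  World := Fin 2
  rel _ _ _ := True
  val w p := w = 0 ∧ p = 0

def deltaW0 : deltaM.World := (0 : Fin 2)

/-- The event model `(E_i, e_i)`: three mutually related events; designated event `0` with
precondition `z`; event `1` with precondition `¬z` and postcondition `{x_i}`; event `2`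
with precondition `¬z` and empty postcondition. -/
def deltaE (i : ℕ) : EvtModel Unit where
  k := 2
  S _ _ _ := true
  pre e := if e = 0 then .atom 0 else .neg (.atom 0)
  post e := if e = 1 then [(i, true)] else []

/-- The event model `(E'_i, e'_i)`: designated event `0` with precondition `z`; event `1`
with precondition `¬z ∧ K̂_a(x_i ∧ φ)` and postcondition `{x_i}`; event `2` with
precondition `¬z ∧ ¬K̂_a(x_i ∧ φ)` and postcondition `{¬x_i}`. -/
def deltaE' (i : ℕ) (ψ : PropForm) : EvtModel Unit where
  k := 2
  S _ _ _ := true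
  pre e :=
    if e = 0 then .atom 0
    else if e = 1 then .and (.neg (.atom 0)) (khat () (.and (.atom i) ψ.toDForm))
    else .and (.neg (.atom 0)) (.neg (khat () (.and (.atom i) ψ.toDForm)))
  post e := if e = 1 then [(i, true)] else if e = 2 then [(i, false)] else []

/-- The formula `χ = [E_1,e_1]…[E_n,e_n][E'_1,e'_1]…[E'_n,e'_n] K̂_a x_n`. -/
def deltaChi (n : ℕ) (ψ : PropForm) : DForm Unit :=
  ((List.range n).map (fun j => deltaE (j+1))).foldr (fun E acc => updSingle E 0 acc)
    (((List.range n).map (fun j => deltaE' (j+1) ψ)).foldr (fun E acc => updSingle E 0 acc)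
      (khat () (.atom n)))

/-- The model `M' = M ⊗ E_1 ⊗ … ⊗ E_n`. -/
def deltaM' (n : ℕ) : EpiModel Unit :=
  (((List.range n).map (fun j => deltaE (j+1))).foldl EpiModel.update deltaM)

/-- The model `M'' = M ⊗ E_1 ⊗ … ⊗ E_n ⊗ E'_1 ⊗ … ⊗ E'_n`. -/
def deltaM'' (n : ℕ) (ψ : PropForm) : EpiModel Unit :=
  (((List.range n).map (fun j => deltaE' (j+1) ψ)).foldl EpiModel.update (deltaM' n))

/-! ### The single-agent multi-pointed PSPACE-hardness construction.
Variable `x_i` is the propositional variable `i`. -/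

/-- The group of worlds corresponding to a truth assignment `α`: a world `none` making
no variable true and, for each `j` with `α x_j = 1`, a world `some j` making exactly `x_j`
true; all worlds mutually `a`-related. -/
def groupModel1 (n : ℕ) (α : ℕ → Bool) : EpiModel Unit where
  World := {o : Option (Fin n) // ∀ j : Fin n, o = some j → α (j.1+1) = true}
  rel _ _ _ := True
  val w p := ∃ j : Fin n, w.1 = some j ∧ p = j.1 + 1

/-- The designated world of the group of worlds corresponding to `α`. -/
def groupW0 (n : ℕ) (α : ℕ → Bool) : (groupModel1 n α).World :=
  ⟨none, fun _ h => nomatch h⟩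

/-- The multi-pointed event model `(E_i, E_i)`: two events, both designated, with
preconditions `⊤` and `¬x_i`, empty postconditions, and only reflexive relations. -/
def qEvt (i : ℕ) : EvtModel Unit where
  k := 1
  S _ e f := decide (e = f)
  pre e := if e = 0 then dtop else .neg (.atom i)
  post _ := []

/-- `χ'`: the result of replacing every variable `x_i` in `ψ` by `K̂_a x_i`. -/
def propKhat : PropForm → DForm Unit
  | .atom p => khat () (.atom p)
  | .neg φ => .neg (propKhat φ)
  | .and φ ψ => .and (propKhat φ) (propKhat ψ)

/-- `qChiAux ψ' m i` is the formula `⟨E_i,E_i⟩[E_{i+1},E_{i+1}]…ψ'` (`m` operators,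
diamond at odd indices, box at even indices). -/
def qChiAux (ψ' : DForm Unit) : ℕ → ℕ → DForm Unit
  | 0, _ => ψ'
  | m+1, i =>
    if i % 2 = 1 then .neg (updAll (qEvt i) (.neg (qChiAux ψ' m (i+1))))
    else updAll (qEvt i) (qChiAux ψ' m (i+1))

/-- The formula `χ = ⟨E_1,E_1⟩[E_2,E_2]…⟨E_{n-1},E_{n-1}⟩[E_n,E_n]χ'`. -/
def qChi (n : ℕ) (ψ : PropForm) : DForm Unit := qChiAux (propKhat ψ) n 1


/-! ### The two-agent PSPACE-hardness construction.
Agents: `a = 0`, `b = 1` (of type `Fin 2`). Propositional variables: `z_0 = 0`,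
`z_1 = 1`, `z_2 = 2`. Variable `x_j` of the QBF corresponds to the z1-chain of length `j`. -/

/-- The underlying worlds of a group of worlds, possibly together with z2-chains:
the central world, the worlds `z1 j k` (position `k` in the z1-chain of length `j+1`,
which represents the variable `x_{j+1}`), and the worlds `z2 i k` (position `k` in the
z2-chain of length `i+1`). -/
inductive GWBase (n m : ℕ) : Type
  | central : GWBase n m
  | z1 : (j : Fin n) → Fin (j.1+2) → GWBase n m
  | z2 : (i : Fin m) → Fin (i.1+2) → GWBase n m

/-- Membership in the `a`-clique: the central world and the first worlds of z1-chains. -/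
def aClique {n m : ℕ} : GWBase n m → Prop
  | .central => True
  | .z1 _ k => k.1 = 0
  | .z2 _ _ => False

/-- Membership in the `b`-clique: the central world and the first worlds of z2-chains. -/
def bClique {n m : ℕ} : GWBase n m → Prop
  | .central => True
  | .z1 _ _ => False
  | .z2 _ k => k.1 = 0

/-- Chain edges: consecutive positions of a z1-chain are related alternately by
`b`, `a`, `b`, … (starting with `b`), and those of a z2-chain alternately by
`a`, `b`, `a`, … (starting with `a`). -/
def chainEdge {n m : ℕ} (ag : Fin 2) : GWBase n m → GWBase n m → Prop
  | .z1 j k, .z1 j' k' =>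
      j.1 = j'.1 ∧ ((k'.1 = k.1 + 1 ∧ ag = (if k.1 % 2 = 0 then 1 else 0)) ∨
        (k.1 = k'.1 + 1 ∧ ag = (if k'.1 % 2 = 0 then 1 else 0)))
  | .z2 i k, .z2 i' k' =>
      i.1 = i'.1 ∧ ((k'.1 = k.1 + 1 ∧ ag = (if k.1 % 2 = 0 then 0 else 1)) ∨
        (k.1 = k'.1 + 1 ∧ ag = (if k'.1 % 2 = 0 then 0 else 1)))
  | _, _ => False

/-- The accessibility relations on `GWBase n m`. -/
def gwRel {n m : ℕ} (ag : Fin 2) (u v : GWBase n m) : Prop :=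
  u = v ∨ (ag = 0 ∧ aClique u ∧ aClique v) ∨ (ag = 1 ∧ bClique u ∧ bClique v) ∨
    chainEdge ag u v

/-- The valuation on `GWBase n m`: the central world makes exactly `z_1` and `z_2` true,
the first world of a chain makes exactly `z_1` (resp. `z_2`) true, the last world of a
chain makes exactly `z_0` true, and all other worlds make no variable true. -/
def gwVal {n m : ℕ} : GWBase n m → ℕ → Prop
  | .central, p => p = 1 ∨ p = 2
  | .z1 j k, p => (k.1 = 0 ∧ p = 1) ∨ (k.1 = j.1 + 1 ∧ p = 0)
  | .z2 i k, p => (k.1 = 0 ∧ p = 2) ∨ (k.1 = i.1 + 1 ∧ p = 0)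

/-- The group of worlds representing the truth assignment `α` to `x_1, …, x_n`
(containing a z1-chain of length `j` exactly when `α x_j = 1`), together with
z2-chains of lengths `1, …, m`. -/
def groupModel2 (n m : ℕ) (α : ℕ → Bool) : EpiModel (Fin 2) where
  World := {u : GWBase n m // ∀ (j : Fin n) (k : Fin (j.1+2)), u = GWBase.z1 j k → α (j.1+1) = true}
  rel ag u v := gwRel ag u.1 v.1
  val u p := gwVal u.1 p

/-- The central (designated) world of `groupModel2 n m α`. -/
def central2 (n m : ℕ) (α : ℕ → Bool) : (groupModel2 n m α).World :=
  ⟨.central, fun _ _ h => nomatch h⟩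

/-- The pair of formulas `(χ^a_j, χ^b_j)`. -/
def chiAB : ℕ → DForm (Fin 2) × DForm (Fin 2)
  | 0 => (.atom 0, .atom 0)
  | j+1 =>
    (khat 0 (.and (.neg (.atom 1)) (.and (.neg (.atom 2)) (chiAB j).2)),
     khat 1 (.and (.neg (.atom 1)) (.and (.neg (.atom 2)) (chiAB j).1)))

def chiA (j : ℕ) : DForm (Fin 2) := (chiAB j).1
def chiB (j : ℕ) : DForm (Fin 2) := (chiAB j).2

/-- `χ_j = z_1 ∧ ¬z_2 ∧ χ^b_j ∧ ¬χ^b_{j-1}` (for `j ≥ 1`). -/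
def chiX (j : ℕ) : DForm (Fin 2) :=
  .and (.atom 1) (.and (.neg (.atom 2)) (.and (chiB j) (.neg (chiB (j-1)))))

/-- `χ'_j = ¬z_1 ∧ z_2 ∧ χ^a_j ∧ ¬χ^a_{j-1}` (for `j ≥ 1`). -/
def chiX' (j : ℕ) : DForm (Fin 2) :=
  .and (.neg (.atom 1)) (.and (.atom 2) (.and (chiA j) (.neg (chiA (j-1)))))

/-- The event model `(E_i, e_i)` of the two-agent construction: events `f^1_i, …, f^5_i`
are `0, …, 4`; `{0,1,2}` is a `b`-clique; `1 S_a 3` and `2 S_a 4`; preconditions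
`⊤, ⊤, ⊤, ¬χ'_i, ¬χ'_i ∧ ¬χ_i`; empty postconditions; designated event `0`. -/
def twoEvt (i : ℕ) : EvtModel (Fin 2) where
  k := 4
  S ag e f := decide (e = f) ||
    (if ag = 1 then decide (e.1 ≤ 2 ∧ f.1 ≤ 2)
     else decide ((e.1 = 1 ∧ f.1 = 3) ∨ (e.1 = 3 ∧ f.1 = 1) ∨
       (e.1 = 2 ∧ f.1 = 4) ∨ (e.1 = 4 ∧ f.1 = 2)))
  pre e :=
    if e.1 ≤ 2 then dtop
    else if e.1 = 3 then .neg (chiX' i)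
    else .and (.neg (chiX' i)) (.neg (chiX i))
  post _ := []

/-- The conjunction `⋀_{1 ≤ j ≤ i} ¬K̂_b χ'_j`. -/
def negConj (i : ℕ) : DForm (Fin 2) :=
  bigAnd ((List.range i).map (fun t => .neg (khat 1 (chiX' (t+1)))))

/-- The conjunction `⋀_{i < j ≤ n} K̂_b χ'_j`. -/
def posConj (n i : ℕ) : DForm (Fin 2) :=
  bigAnd ((List.range (n-i)).map (fun t => khat 1 (chiX' (i+1+t))))

/-- The formula `z_1 ∧ z_2 ∧ ⋀_{1≤j≤i} ¬K̂_b χ'_j ∧ ⋀_{i<j≤n} K̂_b χ'_j`. -/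
def xiBody (n i : ℕ) : DForm (Fin 2) :=
  .and (.atom 1) (.and (.atom 2) (.and (negConj i) (posConj n i)))

/-- `ψ'`: the result of replacing every variable `x_i` in `ψ` by `K̂_a χ_i`. -/
def propToXi : PropForm → DForm (Fin 2)
  | .atom p => khat 0 (chiX p)
  | .neg φ => .neg (propToXi φ)
  | .and φ ψ => .and (propToXi φ) (propToXi ψ)

/-- `xiAux n ψ' m i` is the formula `ξ_i` (with `m = n + 1 - i` remaining steps). -/
def xiAux (n : ℕ) (ψ' : DForm (Fin 2)) : ℕ → ℕ → DForm (Fin 2)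
  | 0, _ => ψ'
  | m+1, i =>
    if i % 2 = 1 then khat 1 (khat 0 (.and (xiBody n i) (xiAux n ψ' m (i+1))))
    else .K 1 (.K 0 (dimp (xiBody n i) (xiAux n ψ' m (i+1))))

/-- The formula `ξ = [E_1,e_1]…[E_n,e_n]ξ_1`. -/
def xiFull (n : ℕ) (ψ : PropForm) : DForm (Fin 2) :=
  ((List.range n).map (fun j => twoEvt (j+1))).foldr (fun E acc => updSingle E 0 acc)
    (xiAux n (propToXi ψ) n 1)

/-- The initial model of the two-agent construction (z1-chains of lengths `1, …, n` for
the all-true assignment, z2-chains of lengths `1, …, n`). -/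
def twoM (n : ℕ) : EpiModel (Fin 2) := groupModel2 n n (fun _ => true)

/-- The model `M' = M ⊗ E_1 ⊗ … ⊗ E_n` of the two-agent construction. -/
def twoM' (n : ℕ) : EpiModel (Fin 2) :=
  ((List.range n).map (fun j => twoEvt (j+1))).foldl EpiModel.update (twoM n)

/-! ### The semi-private-announcement PSPACE-hardness construction. -/

/-- The semi-private announcement of `φ₁` versus `φ₂` to the agents `c` with `A c = true`:
two events with preconditions `φ₁` (designated, event `0`) and `φ₂`, empty postconditions,
related by `S_c` exactly for the agents `c` not in `A` (plus reflexive loops). -/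
def semiPrivate {Agent : Type} [DecidableEq Agent] (φ₁ φ₂ : DForm Agent) (A : Agent → Bool) :
    EvtModel Agent where
  k := 1
  S c e f := decide (e = f) || !(A c)
  pre e := if e = 0 then φ₁ else φ₂
  post _ := []

/-- The semi-private announcement `(E^1_i, f^1_i)`: `¬χ'_{i+n}` versus `¬χ'_{i+2n}`,
announced to agent `a`. -/
def spE1 (n i : ℕ) : EvtModel (Fin 2) :=
  semiPrivate (.neg (chiX' (i+n))) (.neg (chiX' (i+2*n))) (fun c => decide (c = 0))

/-- The semi-private announcement `(E^2_i, f^3_i)`: `⊤` versus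
`(¬K̂_b χ'_{i+n} ∧ z_2) → ¬χ'_i`, announced to agent `b`. -/
def spE2 (n i : ℕ) : EvtModel (Fin 2) :=
  semiPrivate dtop
    (dimp (.and (.neg (khat 1 (chiX' (i+n)))) (.atom 2)) (.neg (chiX' i)))
    (fun c => decide (c = 1))

/-- The semi-private announcement `(E^3_i, f^5_i)`: `⊤` versus
`((¬K̂_b χ'_{i+2n} ∧ z_2) → ¬χ'_i) ∧ ((¬K̂_a K̂_b χ'_{i+2n} ∧ z_1) → ¬χ_i)`,
announced to agent `b`. -/
def spE3 (n i : ℕ) : EvtModel (Fin 2) :=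
  semiPrivate dtop
    (.and (dimp (.and (.neg (khat 1 (chiX' (i+2*n)))) (.atom 2)) (.neg (chiX' i)))
      (dimp (.and (.neg (khat 0 (khat 1 (chiX' (i+2*n))))) (.atom 1)) (.neg (chiX i))))
    (fun c => decide (c = 1))

/-- The list of event models `E^1_1, E^2_1, E^3_1, …, E^1_n, E^2_n, E^3_n`. -/
def spList (n : ℕ) : List (EvtModel (Fin 2)) :=
  ((List.range n).map (fun j => [spE1 n (j+1), spE2 n (j+1), spE3 n (j+1)])).flatten

/-- `spXiAux n ψ' m i` is the formula `ξ_i` of the semi-private construction. -/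
def spXiAux (n : ℕ) (ψ' : DForm (Fin 2)) : ℕ → ℕ → DForm (Fin 2)
  | 0, _ => ψ'
  | m+1, i =>
    if i % 2 = 1 then
      khat 1 (.and (negConj i) (khat 0 (.and (xiBody n i) (spXiAux n ψ' m (i+1)))))
    else
      .K 1 (dimp (negConj i) (.K 0 (dimp (xiBody n i) (spXiAux n ψ' m (i+1)))))

/-- The formula `ξ = [E^1_1,f^1_1][E^2_1,f^3_1][E^3_1,f^5_1]…[E^3_n,f^5_n]ξ_1` of the
semi-private construction. -/
def spXiFull (n : ℕ) (ψ : PropForm) : DForm (Fin 2) :=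
  (spList n).foldr (fun E acc => updSingle E 0 acc) (spXiAux n (propToXi ψ) n 1)

/-- The initial model of the semi-private construction (z1-chains of lengths `1, …, n`
for the all-true assignment, z2-chains of lengths `1, …, 3n`). -/
def spM (n : ℕ) : EpiModel (Fin 2) := groupModel2 n (3*n) (fun _ => true)

/-- The model `M' = M ⊗ E^1_1 ⊗ E^2_1 ⊗ E^3_1 ⊗ … ⊗ E^3_n`. -/
def spM' (n : ℕ) : EpiModel (Fin 2) :=
  (spList n).foldl EpiModel.update (spM n)

/-!
Quantifying `x_i` is simulated by updating the group of worlds with `(E_i, E_i)` at its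
designated world `w0`, which makes no variable true and so admits both events. The event
with precondition `⊤` copies the model, keeping `x_i` true; the event with precondition
`¬x_i` deletes the world making `x_i` true. Since the event model has no arrows between the
two events, the component of `w0` in the product is in either case bisimilar to the group of
worlds of `α` with `x_i` set to the event's truth value. A box over both events is thus a
universal and a diamond an existential quantifier over `x_i`. In a group of worlds
`K̂_a x_j` holds exactly when `α x_j` does, so `χ'` evaluates to `ψ` under `α`.
-/

theorem IsBisim.updModel {Agent : Type} {M N : EpiModel Agent} {Z : M.World → N.World → Prop}
    (hZ : IsBisim M N Z) (k : ℕ) (S : Agent → Fin (k+1) → Fin (k+1) → Bool)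
    (domM : M.World → Fin (k+1) → Prop) (domN : N.World → Fin (k+1) → Prop)
    (hdom : ∀ u u', Z u u' → ∀ e, (domM u e ↔ domN u' e)) (post : Fin (k+1) → List (ℕ × Bool)) :
    IsBisim (updModel M k S domM post) (updModel N k S domN post)
      (fun u u' => Z u.1.1 u'.1.1 ∧ u.1.2 = u'.1.2) := by
  rintro ⟨⟨w, e⟩, hw⟩ ⟨⟨v, e'⟩, hv⟩ ⟨hwv, he⟩
  obtain rfl : e = e' := he
  refine ⟨fun p => ?_, ?_, ?_⟩
  · show (match postEval (post e) p with | some b => b = true | none => M.val w p)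
      ↔ (match postEval (post e) p with | some b => b = true | none => N.val v p)
    cases postEval (post e) p with
    | some b => rfl
    | none => exact (hZ w v hwv).1 p
  · rintro a ⟨⟨w', f⟩, hw'⟩ ⟨hrel, hS⟩
    obtain ⟨v', hrel', hZ'⟩ := (hZ w v hwv).2.1 a w' hrel
    exact ⟨⟨(v', f), (hdom w' v' hZ' f).mp hw'⟩, ⟨hrel', hS⟩, hZ', rfl⟩
  · rintro a ⟨⟨v', f⟩, hv'⟩ ⟨hrel', hS⟩
    obtain ⟨w', hrel, hZ'⟩ := (hZ w v hwv).2.2 a v' hrel'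
    exact ⟨⟨(w', f), (hdom w' v' hZ' f).mpr hv'⟩, ⟨hrel, hS⟩, hZ', rfl⟩

theorem IsBisim.sat_iff {Agent : Type} (φ : DForm Agent) :
    ∀ {M N : EpiModel Agent} {Z : M.World → N.World → Prop}, IsBisim M N Z →
      ∀ {w v}, Z w v → (Sat M w φ ↔ Sat N v φ) := by
  induction φ with
  | atom p => exact fun hZ w v hwv => (hZ w v hwv).1 p
  | neg φ ih => exact fun hZ _ _ hwv => not_congr (ih hZ hwv)
  | and φ ψ ihφ ihψ => exact fun hZ _ _ hwv => and_congr (ihφ hZ hwv) (ihψ hZ hwv)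
  | K a φ ih =>
    intro M N Z hZ w v hwv
    simp only [Sat]
    constructor
    · intro h v' hrel
      obtain ⟨w', hw', hZ'⟩ := (hZ w v hwv).2.2 a v' hrel
      exact (ih hZ hZ').mp (h w' hw')
    · intro h w' hrel
      obtain ⟨v', hv', hZ'⟩ := (hZ w v hwv).2.1 a w' hrel
      exact (ih hZ hZ').mpr (h v' hv')
  | upd k S pre post des φ ihpre ihφ =>
    intro M N Z hZ w v hwv
    have hZ' := hZ.updModel k S _ _ (fun _ _ hz e => ihpre e hZ hz) post
    simp only [Sat]
    refine forall_congr' fun e => forall_congr' fun _ => ⟨fun h hv => ?_, fun h hw => ?_⟩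
    · have hw := (ihpre e hZ hwv).mpr hv
      exact (ihφ hZ' (w := ⟨(w, e), hw⟩) ⟨hwv, rfl⟩).mp (h hw)
    · have hv := (ihpre e hZ hwv).mp hw
      exact (ihφ hZ' (v := ⟨(v, e), hv⟩) ⟨hwv, rfl⟩).mpr (h hv)

theorem sat_dtop {Agent : Type} (M : EpiModel Agent) (w : M.World) : Sat M w dtop :=
  fun h => h.2 h.1

theorem sat_qEvt_pre_iff (M : EpiModel Unit) (w : M.World) (i : ℕ) (e : Fin 2) :
    Sat M w ((qEvt i).pre e) ↔ (M.val w i → e = 0) := by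
  show Sat M w (if e = 0 then dtop else .neg (.atom i)) ↔ _
  by_cases he : e = 0
  · simpa [he] using sat_dtop M w
  · simp only [he, if_false, imp_false]
    rfl

theorem not_groupModel1_val_groupW0 (n : ℕ) (α : ℕ → Bool) (p : ℕ) :
    ¬ (groupModel1 n α).val (groupW0 n α) p := by
  rintro ⟨j, hj, -⟩
  cases hj

theorem sat_qEvt_pre_groupW0 (n i : ℕ) (α : ℕ → Bool) (e : Fin 2) :
    Sat (groupModel1 n α) (groupW0 n α) ((qEvt i).pre e) :=
  (sat_qEvt_pre_iff _ _ i e).mpr fun h => absurd h (not_groupModel1_val_groupW0 n α i)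

theorem isBisim_update_qEvt_groupModel1 (n i : ℕ) (α : ℕ → Bool) (hαi : α i = true)
    (e : Fin 2) :
    IsBisim ((groupModel1 n α).update (qEvt i))
      (groupModel1 n (Function.update α i (decide (e = 0))))
      (fun u v => u.1.2 = e ∧ u.1.1.1 = v.1) := by
  have hupd : ∀ j, Function.update α i (decide (e = 0)) j = true ↔
      α j = true ∧ (j = i → e = 0) := by
    intro j
    by_cases hj : j = i
    · subst hj; simp [hαi]
    · simp [hj]
  rintro ⟨⟨w, f⟩, hw⟩ ⟨v, hv⟩ ⟨hfe, hwv⟩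
  dsimp only at hfe hwv
  subst hfe hwv
  refine ⟨fun p => Iff.rfl, ?_, ?_⟩
  · rintro a ⟨⟨w', f'⟩, hw'⟩ ⟨hrel, hS⟩
    obtain rfl : f = f' := of_decide_eq_true hS
    refine ⟨⟨w'.1, fun j hj => (hupd _).mpr ⟨w'.2 j hj, ?_⟩⟩, trivial, rfl, rfl⟩
    exact fun hji => (sat_qEvt_pre_iff _ _ _ f).mp hw' ⟨j, hj, hji.symm⟩
  · rintro a ⟨v', hv'⟩ hrel
    have hw' : ∀ j : Fin n, v' = some j → α (j.1 + 1) = true :=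
      fun j hj => ((hupd _).mp (hv' j hj)).1
    have hpre : Sat (groupModel1 n α) ⟨v', hw'⟩ ((qEvt i).pre f) :=
      (sat_qEvt_pre_iff _ _ _ f).mpr fun ⟨j, hj, hji⟩ => ((hupd _).mp (hv' j hj)).2 hji.symm
    exact ⟨⟨(⟨v', hw'⟩, f), hpre⟩, ⟨trivial, by simp only [qEvt, decide_eq_true_eq]; rfl⟩, rfl, rfl⟩

theorem sat_updAll_qEvt_groupW0_iff (n i : ℕ) (α : ℕ → Bool) (hαi : α i = true)
    (φ : DForm Unit) :
    Sat (groupModel1 n α) (groupW0 n α) (updAll (qEvt i) φ) ↔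
      ∀ b, Sat (groupModel1 n (Function.update α i b))
        (groupW0 n (Function.update α i b)) φ := by
  have hevent : ∀ e : Fin 2, Sat ((groupModel1 n α).update (qEvt i))
      (⟨(groupW0 n α, e), sat_qEvt_pre_groupW0 n i α e⟩ :
        ((groupModel1 n α).update (qEvt i)).World) φ ↔
      Sat (groupModel1 n (Function.update α i (decide (e = 0))))
        (groupW0 n (Function.update α i (decide (e = 0)))) φ :=
    fun e => (isBisim_update_qEvt_groupModel1 n i α hαi e).sat_iff φ ⟨rfl, rfl⟩
  show (∀ e : Fin 2, true = true → ∀ h : Sat (groupModel1 n α) (groupW0 n α) ((qEvt i).pre e),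
    Sat ((groupModel1 n α).update (qEvt i)) ⟨(groupW0 n α, e), h⟩ φ) ↔ _
  refine (forall_congr' fun e => (forall_prop_of_true rfl).trans
    ((forall_prop_of_true (sat_qEvt_pre_groupW0 n i α e)).trans (hevent e))).trans ?_
  rw [Fin.forall_fin_two, Bool.forall_bool]
  exact and_comm

theorem sat_diamond_qEvt_groupW0_iff (n i : ℕ) (α : ℕ → Bool) (hαi : α i = true)
    (φ : DForm Unit) :
    Sat (groupModel1 n α) (groupW0 n α) (.neg (updAll (qEvt i) (.neg φ))) ↔
      ∃ b, Sat (groupModel1 n (Function.update α i b))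
        (groupW0 n (Function.update α i b)) φ := by
  show ¬ Sat _ _ (updAll (qEvt i) (.neg φ)) ↔ _
  rw [sat_updAll_qEvt_groupW0_iff n i α hαi]
  exact not_forall_not

theorem sat_propKhat_iff (n : ℕ) (α : ℕ → Bool) (w : (groupModel1 n α).World)
    (ψ : PropForm) (hψ : ψ.atomsSub (Set.Icc 1 n)) :
    Sat (groupModel1 n α) w (propKhat ψ) ↔ ψ.eval α = true := by
  induction ψ with
  | atom p =>
    obtain ⟨hp1, hpn⟩ : 1 ≤ p ∧ p ≤ n := hψ
    show (¬ ∀ v, True → ¬ (groupModel1 n α).val v p) ↔ α p = true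
    push Not
    constructor
    · rintro ⟨v, -, j, hj, rfl⟩
      exact v.2 j hj
    · intro hαp
      have hj : p - 1 < n := by omega
      refine ⟨⟨some ⟨p - 1, hj⟩, fun j hj' => ?_⟩, trivial, ⟨p - 1, hj⟩, rfl, by simp; omega⟩
      obtain rfl := Option.some_injective _ hj'
      simpa [Nat.sub_add_cancel hp1] using hαp
  | neg φ ih =>
    exact (not_congr (ih hψ)).trans (by simp [PropForm.eval])
  | and φ₁ φ₂ ih₁ ih₂ =>
    exact (and_congr (ih₁ hψ.1) (ih₂ hψ.2)).trans (by simp [PropForm.eval])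

theorem qbfAux_iff_sat_qChiAux (n : ℕ) (ψ : PropForm) (hψ : ψ.atomsSub (Set.Icc 1 n))
    (m i : ℕ) (α : ℕ → Bool) (hα : ∀ j, i ≤ j → j < i + m → α j = true) :
    QBFAux ψ m i α ↔ Sat (groupModel1 n α) (groupW0 n α) (qChiAux (propKhat ψ) m i) := by
  induction m generalizing i α with
  | zero => exact (sat_propKhat_iff n α _ ψ hψ).symm
  | succ m ih =>
    have hαi : α i = true := hα i le_rfl (by omega)
    have ih' : ∀ b, QBFAux ψ m (i + 1) (Function.update α i b) ↔
        Sat (groupModel1 n (Function.update α i b)) (groupW0 n (Function.update α i b))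
          (qChiAux (propKhat ψ) m (i + 1)) := fun b =>
      ih (i + 1) _ fun j hj hjm => by
        rw [Function.update_of_ne (by omega)]
        exact hα j (by omega) (by omega)
    rw [QBFAux, qChiAux]
    split_ifs
    · rw [sat_diamond_qEvt_groupW0_iff n i α hαi]
      exact exists_congr ih'
    · rw [sat_updAll_qEvt_groupW0_iff n i α hαi]
      exact forall_congr' ih'

theorem statement9_general (n : ℕ) (ψ : PropForm)
    (hvars : ψ.atomsSub (Set.Icc 1 n))
    (i : ℕ)
    (α : ℕ → Bool) (hα : ∀ j, i ≤ j → j ≤ n → α j = true) :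
    QBFAux ψ (n + 1 - i) i α ↔
      Sat (groupModel1 n α) (groupW0 n α) (qChiAux (propKhat ψ) (n + 1 - i) i) :=
  qbfAux_iff_sat_qChiAux n ψ hvars (n + 1 - i) i α fun j hij hj => hα j hij (by omega)

/-- The inductive statement of the single-agent multi-pointed
PSPACE-hardness construction: for every `1 ≤ i ≤ n + 1`, every truth assignment `α`
setting all of `x_i, …, x_n` to true, and the group of worlds `(M, w)` corresponding to
`α`: the partially quantified Boolean formula `Q_i x_i … ∃x_{n-1} ∀x_n. ψ` is true under
the restriction of `α` to `x_1, …, x_{i-1}` if and only if `w` makes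
`⟨E_i,E_i⟩[E_{i+1},E_{i+1}]…[E_n,E_n]χ'` true (diamonds at odd indices, boxes at even
indices; for `i = n + 1` the formula is `χ'`). -/
theorem statement9 (n : ℕ) (hn : Even n) (ψ : PropForm)
    (hvars : ψ.atomsSub (Set.Icc 1 n))
    (i : ℕ) (h1 : 1 ≤ i) (h2 : i ≤ n + 1)
    (α : ℕ → Bool) (hα : ∀ j, i ≤ j → j ≤ n → α j = true) :
    QBFAux ψ (n + 1 - i) i α ↔
      Sat (groupModel1 n α) (groupW0 n α) (qChiAux (propKhat ψ) (n + 1 - i) i) :=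
  statement9_general n ψ hvars i α hα

end DELMC
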